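/- arXiv:1701.08554 — 2 statements merged into one kernel-verified Lean document; each statement's English description precedes it below -/
import Mathlib

section
/- For every Hermitian Toeplitz matrix T of size n that is positive semidefinite and of rank r, there exist frequencies f_1,...,f_r in [0,1) and positive reals d_1,...,d_r such that T = Σ_k d_k a(f_k) a(f_k)^*, where a(f) = (1, e^{2πif}, ..., e^{2πi(n-1)f})^T. -/
open Matrix Complex Set
open scoped ComplexOrder

/-- The complex exponential atom `a(f) ∈ ℂ^n`, entries `e^{2πifj}`. -/
noncomputable def atom (n : ℕ) (f : ℝ) : Fin n → ℂ :=
  fun j => Complex.exp (Complex.I * ((2 * Real.pi * f * (j : ℕ) : ℝ) : ℂ))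

/-- The Hermitian Toeplitz generator: `toep n u` is the Hermitian Toeplitz matrix
whose first row is `u`. -/
noncomputable def toep (n : ℕ) (u : Fin n → ℂ) : Matrix (Fin n) (Fin n) ℂ :=
  Matrix.of fun j k =>
    if _h : (j : ℕ) ≤ (k : ℕ) then u ⟨(k : ℕ) - (j : ℕ), lt_of_le_of_lt (Nat.sub_le _ _) k.isLt⟩
    else star (u ⟨(j : ℕ) - (k : ℕ), lt_of_le_of_lt (Nat.sub_le _ _) j.isLt⟩)

/-!
Write `T` as the Gram matrix of vectors `b₀, …, b_{n-1}` spanning a space `W` of dimension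
`r = rank T`. The Toeplitz structure says `⟪b_{j+1}, b_{k+1}⟫ = ⟪b_j, b_k⟫`, so the shift
`b_j ↦ b_{j+1}` extends to a unitary `U` of `W`, and `b_j = U^j b₀`. In an orthonormal eigenbasis
`v_i` of `U`, with eigenvalues `μ_i` on the unit circle, `b_j = ∑ c_i μ_i^j v_i`, hence
`T = ∑ |c_i|² a(f_i) a(f_i)^*` where `e^{2πi f_i} = conj μ_i`. No `c_i` vanishes because the
`b_j` span `W`.
-/

open scoped InnerProductSpace ComplexConjugate
open Module Submodule

section Gram

variable {𝕜 E n : Type*} [RCLike 𝕜] [NormedAddCommGroup E] [InnerProductSpace 𝕜 E]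

theorem Matrix.PosSemidef.exists_eq_gram [Fintype n] {A : Matrix n n 𝕜} (hA : A.PosSemidef) :
    ∃ (p : ℕ) (b : n → EuclideanSpace 𝕜 (Fin p)), A = gram 𝕜 b := by
  obtain ⟨p, v, rfl⟩ := posSemidef_iff_eq_sum_vecMulVec.mp hA
  refine ⟨p, fun j => WithLp.toLp 2 fun i => star (v i j), ?_⟩
  ext j k
  simp [Matrix.sum_apply, vecMulVec_apply, PiLp.inner_apply, mul_comm]

theorem Matrix.rank_gram [Fintype n] [FiniteDimensional 𝕜 E] (b : n → E) :
    (gram 𝕜 b).rank = finrank 𝕜 (span 𝕜 (range b)) := by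
  let v := stdOrthonormalBasis 𝕜 E
  rw [gram_eq_conjTranspose_mul v, rank_conjTranspose_mul_self, rank_eq_finrank_span_cols,
    ← v.toBasis.equivFun.finrank_map_eq, map_span, ← range_comp]
  rfl

theorem OrthonormalBasis.gram_eq_sum_vecMulVec {ι : Type*} [Fintype ι]
    (v : OrthonormalBasis ι 𝕜 E) (b : n → E) :
    gram 𝕜 b = ∑ i, vecMulVec (star fun j => v.repr (b j) i) (fun j => v.repr (b j) i) := by
  ext j k
  simp [Matrix.sum_apply, vecMulVec_apply, ← v.sum_inner_mul_inner (b j) (b k),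
    v.repr_apply_apply]

end Gram

theorem LinearIsometry.exists_apply_eq_of_inner_eq {𝕜 E ι : Type*} [RCLike 𝕜]
    [NormedAddCommGroup E] [InnerProductSpace 𝕜 E] [FiniteDimensional 𝕜 E]
    {v w : ι → E} (h : ∀ i j, ⟪v i, v j⟫_𝕜 = ⟪w i, w j⟫_𝕜) :
    ∃ U : E →ₗᵢ[𝕜] E, ∀ i, U (v i) = w i := by
  let Φv := Finsupp.linearCombination 𝕜 v
  let Φw := Finsupp.linearCombination 𝕜 w
  have hnorm : ∀ c, ‖Φw c‖ = ‖Φv c‖ := by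
    intro c
    have : ⟪Φw c, Φw c⟫_𝕜 = ⟪Φv c, Φv c⟫_𝕜 := by
      simp only [Φv, Φw, Finsupp.linearCombination_apply, Finsupp.sum, sum_inner, inner_sum,
        inner_smul_left, inner_smul_right, h]
    rw [@norm_eq_sqrt_re_inner 𝕜, @norm_eq_sqrt_re_inner 𝕜, this]
  have hker : LinearMap.ker Φv ≤ LinearMap.ker Φw := fun c hc => by
    rw [LinearMap.mem_ker, ← norm_eq_zero, hnorm, norm_eq_zero]
    exact hc
  let L : LinearMap.range Φv →ₗ[𝕜] E :=
    (LinearMap.ker Φv).liftQ Φw hker ∘ₗ Φv.quotKerEquivRange.symm.toLinearMap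
  have hL : ∀ c, L ⟨Φv c, LinearMap.mem_range_self Φv c⟩ = Φw c := fun c => by
    simp [L, LinearMap.quotKerEquivRange_symm_apply_image]
  let L' : LinearMap.range Φv →ₗᵢ[𝕜] E :=
    { L with
      norm_map' := by
        rintro ⟨_, c, rfl⟩
        exact (congrArg norm (hL c)).trans (hnorm c) }
  refine ⟨L'.extend, fun i => ?_⟩
  have hv : v i = Φv (Finsupp.single i 1) := by simp [Φv]
  have hw : w i = Φw (Finsupp.single i 1) := by simp [Φw]
  rw [hv, hw, ← hL]
  exact L'.extend_apply ⟨_, LinearMap.mem_range_self Φv _⟩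

theorem Module.End.exists_norm_eq_one_not_hasEigenvalue {M : Type*} [AddCommGroup M]
    [Module ℂ M] [FiniteDimensional ℂ M] (f : Module.End ℂ M) :
    ∃ ν : ℂ, ‖ν‖ = 1 ∧ ¬ f.HasEigenvalue ν := by
  have hrank : 1 < Module.rank ℝ ℂ := by simp [Complex.rank_real_complex]
  have hcircle : (Metric.sphere (0 : ℂ) 1).Infinite :=
    (isConnected_sphere hrank 0 zero_le_one).isPreconnected.infinite_of_nontrivial
      ⟨1, by simp, -1, by simp, by norm_num⟩
  obtain ⟨ν, hν, hνf⟩ := (hcircle.sdiff f.finite_hasEigenvalue).nonempty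
  exact ⟨ν, by simpa using hν, hνf⟩

section Unitary

variable {E : Type*} [NormedAddCommGroup E] [InnerProductSpace ℂ E] [FiniteDimensional ℂ E]

theorem LinearIsometry.exists_isSymmetric_eigenvector_imp_eigenvector (U : E →ₗᵢ[ℂ] E) :
    ∃ H : E →ₗ[ℂ] E, H.IsSymmetric ∧
      ∀ (x : E) (t : ℝ), H x = (t : ℂ) • x → ∃ μ : ℂ, ‖μ‖ = 1 ∧ U x = μ • x := by
  obtain ⟨ν, hν, hνU⟩ := Module.End.exists_norm_eq_one_not_hasEigenvalue U.toLinearMap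
  have hνν : conj ν * ν = 1 := by
    rw [← normSq_eq_conj_mul_self, normSq_eq_norm_sq, hν]
    norm_num
  let S : E →ₗ[ℂ] E := ν • LinearMap.id - U.toLinearMap
  have hS : Function.Injective S := by
    rw [← LinearMap.ker_eq_bot, Submodule.eq_bot_iff]
    intro x hx
    by_contra hx0
    refine hνU (Module.End.hasEigenvalue_of_hasEigenvector ⟨?_, hx0⟩)
    rw [Module.End.mem_eigenspace_iff]
    exact (sub_eq_zero.mp hx).symm
  let Se := LinearEquiv.ofInjectiveEndo S hS
  -- The Cayley transform `H = I (ν + U) (ν - U)⁻¹`: symmetric since `U` is isometric and `‖ν‖ = 1`.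
  let H : E →ₗ[ℂ] E := I • (ν • LinearMap.id + U.toLinearMap) ∘ₗ Se.symm.toLinearMap
  have hH : ∀ a, H (ν • a - U a) = I • (ν • a + U a) := fun a => by
    have : Se.symm (ν • a - U a) = a := Se.symm_apply_eq.mpr rfl
    simp [H, this]
  have hSe : ∀ x, x = ν • Se.symm x - U (Se.symm x) := fun x => (Se.apply_symm_apply x).symm
  refine ⟨H, fun x y => ?_, fun x t hx => ?_⟩
  · rw [hSe x, hSe y, hH, hH]
    simp only [inner_add_left, inner_add_right, inner_sub_left, inner_sub_right, inner_smul_left,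
      inner_smul_right, U.inner_map_map, conj_I]
    linear_combination (-2 * I * ⟪Se.symm x, Se.symm y⟫_ℂ) * hνν
  · set a := Se.symm x
    have hxa : x = ν • a - U a := hSe x
    have hne : (t : ℂ) + I ≠ 0 := fun h => by simpa using congrArg Complex.im h
    have hta : ((t : ℂ) + I) • U a = ((t : ℂ) - I) • ν • a := by
      have h := hH a
      rw [← hxa, hx, hxa] at h
      linear_combination (norm := module) -h
    set μ := ν * (((t : ℂ) - I) / ((t : ℂ) + I)) with hμ
    have hUa : U a = μ • a := by
      rw [← inv_smul_smul₀ hne (U a), hta, smul_smul, smul_smul, hμ]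
      congr 1
      field_simp
    refine ⟨μ, ?_, ?_⟩
    · have hconj : conj ((t : ℂ) + I) = (t : ℂ) - I := by simp [sub_eq_add_neg]
      rw [norm_mul, norm_div, hν, ← hconj, norm_conj, div_self (norm_ne_zero_iff.mpr hne),
        one_mul]
    · rw [hxa, map_sub, LinearIsometry.map_smul, hUa, LinearIsometry.map_smul, hUa]
      module

theorem LinearIsometry.exists_orthonormalBasis_eigenvectors {N : ℕ} (hN : finrank ℂ E = N)
    (U : E →ₗᵢ[ℂ] E) :
    ∃ (v : OrthonormalBasis (Fin N) ℂ E) (μ : Fin N → ℂ),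
      (∀ i, ‖μ i‖ = 1) ∧ ∀ i, U (v i) = μ i • v i := by
  obtain ⟨H, hH, hU⟩ := U.exists_isSymmetric_eigenvector_imp_eigenvector
  choose μ hμ hUμ using fun i => hU _ _ (hH.apply_eigenvectorBasis hN i)
  exact ⟨hH.eigenvectorBasis hN, μ, hμ, hUμ⟩

theorem exists_orthonormalBasis_repr_eq_mul_pow {N m : ℕ} (hN : finrank ℂ E = N)
    {b : Fin (m + 1) → E} (hspan : span ℂ (range b) = ⊤)
    (hshift : ∀ j k : Fin m, ⟪b j.castSucc, b k.castSucc⟫_ℂ = ⟪b j.succ, b k.succ⟫_ℂ) :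
    ∃ (v : OrthonormalBasis (Fin N) ℂ E) (μ c : Fin N → ℂ), (∀ i, ‖μ i‖ = 1) ∧ (∀ i, c i ≠ 0) ∧
      ∀ j i, v.repr (b j) i = c i * μ i ^ (j : ℕ) := by
  obtain ⟨U, hU⟩ := LinearIsometry.exists_apply_eq_of_inner_eq hshift
  obtain ⟨v, μ, hμ, hUv⟩ := U.exists_orthonormalBasis_eigenvectors hN
  have hrepr_U : ∀ x i, v.repr (U x) i = μ i * v.repr x i := fun x i => by
    have h := U.inner_map_map (v i) x
    rw [hUv, inner_smul_left] at h
    have hμμ : μ i * conj (μ i) = 1 := by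
      rw [mul_conj, normSq_eq_norm_sq, hμ]
      norm_num
    rw [v.repr_apply_apply, v.repr_apply_apply, ← h, ← mul_assoc, hμμ, one_mul]
  let c i := v.repr (b 0) i
  have hrepr : ∀ j i, v.repr (b j) i = c i * μ i ^ (j : ℕ) := fun j i => by
    induction j using Fin.induction with
    | zero => simp [c]
    | succ j ih =>
      rw [← hU, hrepr_U, ih, Fin.val_succ, Fin.val_castSucc]
      ring
  refine ⟨v, μ, c, hμ, fun i hci => ?_, hrepr⟩
  have hker : span ℂ (range b) ≤ LinearMap.ker (v.toBasis.coord i) := span_le.mpr <| by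
    rintro _ ⟨j, rfl⟩
    simp [hrepr, hci]
  rw [hspan] at hker
  simpa using hker (mem_top (x := v i))

end Unitary

theorem exists_mem_Ico_exp_eq {z : ℂ} (hz : ‖z‖ = 1) :
    ∃ f ∈ Ico (0 : ℝ) 1, exp (I * ((2 * Real.pi * f : ℝ) : ℂ)) = z := by
  refine ⟨Int.fract (z.arg / (2 * Real.pi)), ⟨Int.fract_nonneg _, Int.fract_lt_one _⟩, ?_⟩
  have h2π : (2 * Real.pi : ℂ) ≠ 0 := by exact_mod_cast Real.two_pi_pos.ne'
  have hz' : exp (z.arg * I) = z := by simpa [hz] using norm_mul_exp_arg_mul_I z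
  conv_rhs => rw [← hz']
  rw [Int.fract, exp_eq_exp_iff_exists_int]
  exact ⟨-⌊z.arg / (2 * Real.pi)⌋, by push_cast; field_simp; ring⟩

theorem atom_eq_pow (n : ℕ) (f : ℝ) :
    atom n f = fun j : Fin n => exp (I * ((2 * Real.pi * f : ℝ) : ℂ)) ^ (j : ℕ) := by
  ext j
  rw [atom, ← exp_nat_mul]
  congr 1
  push_cast
  ring

theorem toep_succ_succ {m : ℕ} (u : Fin (m + 1) → ℂ) (j k : Fin m) :
    toep (m + 1) u j.succ k.succ = toep (m + 1) u j.castSucc k.castSucc := by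
  simp only [toep, of_apply, Fin.val_castSucc, Fin.val_succ, Nat.add_sub_add_right,
    Nat.add_le_add_iff_right]

theorem caratheodory_toeplitz_general (n r : ℕ) (u : Fin n → ℂ) (T : Matrix (Fin n) (Fin n) ℂ)
    (hToep : T = toep n u) (hPSD : T.PosSemidef)
    (hrank : T.rank = r) :
    ∃ (f d : Fin r → ℝ), (∀ k, f k ∈ Set.Ico (0 : ℝ) 1) ∧ (∀ k, 0 < d k) ∧
      T = ∑ k, d k • Matrix.vecMulVec (atom n (f k)) (star (atom n (f k))) := by
  rcases n with _ | m
  · obtain rfl : r = 0 := by rw [← hrank, Subsingleton.elim T 0, rank_zero]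
    exact ⟨finZeroElim, finZeroElim, finZeroElim, finZeroElim, Subsingleton.elim _ _⟩
  obtain ⟨p, b, rfl⟩ := hPSD.exists_eq_gram
  let b' : Fin (m + 1) → span ℂ (range b) := fun j => ⟨b j, subset_span (mem_range_self j)⟩
  have hgram : gram ℂ b' = gram ℂ b := rfl
  have hspan : span ℂ (range b') = ⊤ := by
    convert span_span_coe_preimage (R := ℂ) (s := range b)
    ext ⟨x, hx⟩
    simp [b']
  have hN : finrank ℂ (span ℂ (range b)) = r := by rw [← hrank, rank_gram]
  have hshift : ∀ j k : Fin m, ⟪b' j.castSucc, b' k.castSucc⟫_ℂ = ⟪b' j.succ, b' k.succ⟫_ℂ :=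
    fun j k => by simpa [← gram_apply, hgram, hToep] using (toep_succ_succ u j k).symm
  obtain ⟨v, μ, c, hμ, hc, hrepr⟩ := exists_orthonormalBasis_repr_eq_mul_pow hN hspan hshift
  choose f hf hexp using fun i => exists_mem_Ico_exp_eq ((norm_conj (μ i)).trans (hμ i))
  refine ⟨f, fun i => ‖c i‖ ^ 2, hf, fun i => by have := hc i; positivity, ?_⟩
  rw [← hgram, v.gram_eq_sum_vecMulVec]
  refine Finset.sum_congr rfl fun i _ => ?_
  ext j k
  simp only [hrepr, atom_eq_pow, hexp, vecMulVec_apply, Pi.star_apply, Matrix.smul_apply]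
  rw [real_smul, ofReal_pow, ← mul_conj', star_mul', star_pow, star_pow, star_def, conj_conj]
  ring

/-- Carathéodory–Toeplitz: every PSD Hermitian Toeplitz matrix of rank `r` is a
positive combination of `r` rank-one outer products of exponential atoms. -/
theorem caratheodory_toeplitz (n r : ℕ) (u : Fin n → ℂ) (T : Matrix (Fin n) (Fin n) ℂ)
    (hToep : T = toep n u) (hHerm : T.IsHermitian) (hPSD : T.PosSemidef)
    (hrank : T.rank = r) :
    ∃ (f d : Fin r → ℝ), (∀ k, f k ∈ Set.Ico (0 : ℝ) 1) ∧ (∀ k, 0 < d k) ∧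
      T = ∑ k, d k • Matrix.vecMulVec (atom n (f k)) (star (atom n (f k))) :=
  caratheodory_toeplitz_general n r u T hToep hPSD hrank
end

section
/- Let V ∈ ℂ^{m×r}, D ∈ M_r(ℝ) a positive diagonal matrix, t > 0, y = V w for some w ∈ ℂ^r, and suppose V D V^* ⪰ (1/t) y y^*. If there exists q ∈ ℂ^m with V^* q = sign(w) (the entrywise phase vector of w), then tr(D) ≥ (1/t)(Σ_k |w_k|)². -/
open Matrix Complex Set
open scoped ComplexOrder

/-- The entrywise phase (sign) of a complex number. -/
noncomputable def csign (z : ℂ) : ℂ := if z = 0 then 0 else z / (‖z‖ : ℂ)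

/-!
Evaluate the quadratic form of `V D Vᴴ - t⁻¹ y yᴴ` at the vector `q` with `Vᴴ q = sign w`.
The first term gives `∑ d_k |sign w_k|² ≤ tr D`, and since `qᴴ y = (Vᴴ q)ᴴ w = ∑ |w_k|`,
the second gives `t⁻¹ (∑ |w_k|)²`.
-/

lemma star_csign_mul_self (z : ℂ) : star (csign z) * z = ‖z‖ := by
  by_cases hz : z = 0
  · simp [hz]
  · have hnorm : (‖z‖ : ℂ) ≠ 0 := by simpa using hz
    rw [csign, if_neg hz, star_div₀, Complex.star_def, Complex.conj_ofReal,
      div_mul_eq_mul_div, div_eq_iff hnorm, ← Complex.normSq_eq_conj_mul_self,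
      Complex.normSq_eq_norm_sq]
    push_cast
    ring

lemma norm_csign_le_one (z : ℂ) : ‖csign z‖ ≤ 1 := by
  by_cases hz : z = 0
  · simp [csign, hz]
  · simp [csign, hz, norm_ne_zero_iff.mpr hz]

namespace Matrix

variable {𝕜 m r : Type*} [RCLike 𝕜] [Fintype m] [Fintype r]

lemma star_dotProduct_mulVec_eq (V : Matrix m r 𝕜) (q : m → 𝕜) (w : r → 𝕜) :
    star q ⬝ᵥ (V *ᵥ w) = star (Vᴴ *ᵥ q) ⬝ᵥ w := by
  rw [dotProduct_mulVec, star_mulVec, conjTranspose_conjTranspose]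

lemma star_dotProduct_vecMulVec_mulVec (y q : m → 𝕜) :
    star q ⬝ᵥ (vecMulVec y (star y) *ᵥ q) = ((‖star q ⬝ᵥ y‖ ^ 2 : ℝ) : 𝕜) := by
  rw [vecMulVec_mulVec, op_smul_eq_smul, dotProduct_smul, smul_eq_mul, star_dotProduct,
    RCLike.ofReal_pow, ← RCLike.mul_conj, RCLike.star_def, mul_comm]

lemma re_star_dotProduct_mul_diagonal_mul_conjTranspose_mulVec [DecidableEq r]
    (V : Matrix m r 𝕜) (d : r → ℝ) (q : m → 𝕜) :
    RCLike.re (star q ⬝ᵥ ((V * diagonal (fun k => (d k : 𝕜)) * Vᴴ) *ᵥ q)) =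
      ∑ k, d k * ‖(Vᴴ *ᵥ q) k‖ ^ 2 := by
  rw [Matrix.mul_assoc, ← mulVec_mulVec, star_dotProduct_mulVec_eq, ← mulVec_mulVec]
  simp only [dotProduct, mulVec_diagonal, Pi.star_apply, map_sum]
  refine Finset.sum_congr rfl fun k _ => ?_
  rw [mul_left_comm, RCLike.star_def, RCLike.conj_mul, ← RCLike.ofReal_pow, RCLike.re_ofReal_mul,
    RCLike.ofReal_re]

lemma PosSemidef.mul_norm_sq_le_re_star_dotProduct {A : Matrix m m 𝕜} {c : ℝ} {y : m → 𝕜}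
    (h : (A - (c : 𝕜) • vecMulVec y (star y)).PosSemidef) (q : m → 𝕜) :
    c * ‖star q ⬝ᵥ y‖ ^ 2 ≤ RCLike.re (star q ⬝ᵥ (A *ᵥ q)) := by
  have := h.re_dotProduct_nonneg q
  rw [sub_mulVec, dotProduct_sub, smul_mulVec, dotProduct_smul, star_dotProduct_vecMulVec_mulVec,
    smul_eq_mul, map_sub, ← RCLike.ofReal_mul, RCLike.ofReal_re] at this
  linarith

end Matrix

theorem trace_lower_bound_general (m r : ℕ) (V : Matrix (Fin m) (Fin r) ℂ)
    (d : Fin r → ℝ) (hd : ∀ k, 0 < d k) (t : ℝ)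
    (w : Fin r → ℂ) (y : Fin m → ℂ) (hy : y = V.mulVec w)
    (hpsd : (V * Matrix.diagonal (fun k => (d k : ℂ)) * Vᴴ -
        ((t : ℂ))⁻¹ • Matrix.vecMulVec y (star y)).PosSemidef)
    (hq : ∃ q : Fin m → ℂ, Vᴴ.mulVec q = fun k => csign (w k)) :
    (1 / t) * (∑ k, ‖w k‖) ^ 2 ≤ ∑ k, d k := by
  obtain ⟨q, hq⟩ := hq
  have hqy : star q ⬝ᵥ y = ((∑ k, ‖w k‖ : ℝ) : ℂ) := by
    rw [hy, star_dotProduct_mulVec_eq, hq]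
    push_cast
    exact Finset.sum_congr rfl fun k _ => star_csign_mul_self (w k)
  rw [← Complex.ofReal_inv] at hpsd
  calc 1 / t * (∑ k, ‖w k‖) ^ 2 = t⁻¹ * ‖star q ⬝ᵥ y‖ ^ 2 := by
        rw [hqy, Complex.norm_real, Real.norm_of_nonneg (by positivity), one_div]
    _ ≤ RCLike.re (star q ⬝ᵥ ((V * diagonal (fun k => (d k : ℂ)) * Vᴴ) *ᵥ q)) :=
        hpsd.mul_norm_sq_le_re_star_dotProduct q
    _ = ∑ k, d k * ‖(Vᴴ *ᵥ q) k‖ ^ 2 :=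
        re_star_dotProduct_mul_diagonal_mul_conjTranspose_mulVec V d q
    _ = ∑ k, d k * ‖csign (w k)‖ ^ 2 := by rw [hq]
    _ ≤ ∑ k, d k := Finset.sum_le_sum fun k _ =>
        mul_le_of_le_one_right (hd k).le (pow_le_one₀ (norm_nonneg _) (norm_csign_le_one _))

/-- If `V D Vᴴ ⪰ (1/t) y yᴴ` with `y = V w`, `D = diag(d)` positive, `t > 0`, and some `q`
satisfies `Vᴴ q = sign(w)`, then `tr(D) ≥ (1/t)(Σ|w_k|)²`. -/
theorem trace_lower_bound (m r : ℕ) (V : Matrix (Fin m) (Fin r) ℂ)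
    (d : Fin r → ℝ) (hd : ∀ k, 0 < d k) (t : ℝ) (ht : 0 < t)
    (w : Fin r → ℂ) (y : Fin m → ℂ) (hy : y = V.mulVec w)
    (hpsd : (V * Matrix.diagonal (fun k => (d k : ℂ)) * Vᴴ -
        ((t : ℂ))⁻¹ • Matrix.vecMulVec y (star y)).PosSemidef)
    (hq : ∃ q : Fin m → ℂ, Vᴴ.mulVec q = fun k => csign (w k)) :
    (1 / t) * (∑ k, ‖w k‖) ^ 2 ≤ ∑ k, d k :=
  trace_lower_bound_general m r V d hd t w y hy hpsd hq
end
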